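/- Let $H \in (0,1)$, $0 < \tau_1 < T$, and let $B^H$ be a fractional Brownian motion. Define $\hat{B}_s^H = \frac{B_{\tau_1}^H}{2\tau_1^{2H}}(s^{2H} + \tau_1^{2H} - |s-\tau_1|^{2H})$ for $s \ge \tau_1$ and $\hat{B}_s^H = 0$ for $s < \tau_1$. Then the aggregate squared error distortion satisfies $\mathbb{E}\int_0^T (B_s^H - \hat{B}_s^H)^2\, ds = \frac{T^{2H+1}}{2H+1} - \frac{1}{4 \tau_1^{2H}} \int_{\tau_1}^T (s^{2H} + \tau_1^{2H} - |s - \tau_1|^{2H})^2\, ds$. -/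

import Mathlib

/-!
By Fubini the distortion is the time integral of the mean-square errors `𝔼(B_s - B̂_s)²`.
For `s ≥ τ₁`, `B̂_s` is the orthogonal projection of `B_s` onto `ℝ B_{τ₁}`, so by Pythagoras its
error is `𝔼B_s² - 𝔼[B_s B_{τ₁}]² / 𝔼B_{τ₁}²`; for `s < τ₁` it is `𝔼B_s² = s^{2H}`. Integrating
`s^{2H}` over `[0, T]` and the squared covariance over `[τ₁, T]` gives the formula.
-/

open MeasureTheory Set

section BestLinearPredictor

variable {Ω : Type*} [MeasurableSpace Ω] {μ : Measure Ω}

/-- The `L²(μ)`-projection of `X` onto the line `ℝ Y`; for centred jointly Gaussian `X`, `Y` it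
is the conditional expectation `𝔼[X | Y]`. -/
noncomputable def bestLinearPredictor (μ : Measure Ω) (X Y : Ω → ℝ) : Ω → ℝ :=
  fun ω => (∫ ω, X ω * Y ω ∂μ) / (∫ ω, Y ω * Y ω ∂μ) * Y ω

theorem integral_sq_sub_bestLinearPredictor {X Y : Ω → ℝ}
    (hXX : Integrable (fun ω => X ω * X ω) μ) (hXY : Integrable (fun ω => X ω * Y ω) μ)
    (hYY : Integrable (fun ω => Y ω * Y ω) μ) :
    ∫ ω, (X ω - bestLinearPredictor μ X Y ω) ^ 2 ∂μ
      = ∫ ω, X ω * X ω ∂μ - (∫ ω, X ω * Y ω ∂μ) ^ 2 / ∫ ω, Y ω * Y ω ∂μ := by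
  set c := (∫ ω, X ω * Y ω ∂μ) / ∫ ω, Y ω * Y ω ∂μ with hc
  have hexpand : (fun ω => (X ω - bestLinearPredictor μ X Y ω) ^ 2)
      = fun ω => X ω * X ω - 2 * c * (X ω * Y ω) + c ^ 2 * (Y ω * Y ω) := by
    funext ω
    simp only [bestLinearPredictor]
    ring
  have hcross : Integrable (fun ω => 2 * c * (X ω * Y ω)) μ := hXY.const_mul _
  have hdiff : Integrable (fun ω => X ω * X ω - 2 * c * (X ω * Y ω)) μ := hXX.sub hcross
  rw [hexpand, integral_add hdiff (hYY.const_mul _), integral_sub hXX hcross,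
    integral_const_mul, integral_const_mul, hc]
  generalize ∫ ω, X ω * Y ω ∂μ = a
  generalize ∫ ω, Y ω * Y ω ∂μ = b
  rcases eq_or_ne b 0 with hb | hb
  · simp [hb]
  · field_simp
    ring

end BestLinearPredictor

section FractionalBrownianMotion

variable {H : ℝ}

noncomputable def fbmCov (H t s : ℝ) : ℝ := (1 / 2) * (t ^ (2 * H) + s ^ (2 * H) - |t - s| ^ (2 * H))

theorem fbmCov_self (hH : 0 < H) (t : ℝ) : fbmCov H t t = t ^ (2 * H) := by
  rw [fbmCov, sub_self, abs_zero, Real.zero_rpow (by positivity)]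
  ring

theorem continuous_fbmCov_left (hH : 0 < H) (s : ℝ) : Continuous fun t => fbmCov H t s := by
  unfold fbmCov
  fun_prop (disch := positivity)

theorem fbmCov_sq_div (hH : 0 < H) {τ : ℝ} (hτ : 0 < τ) (s : ℝ) :
    fbmCov H s τ ^ 2 / fbmCov H τ τ
      = 1 / (4 * τ ^ (2 * H)) * (s ^ (2 * H) + τ ^ (2 * H) - |s - τ| ^ (2 * H)) ^ 2 := by
  have : τ ^ (2 * H) ≠ 0 := (Real.rpow_pos_of_pos hτ _).ne'
  rw [fbmCov_self hH, fbmCov]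
  field_simp
  ring

variable {Ω : Type*} [MeasurableSpace Ω] {μ : Measure Ω} {B : ℝ → Ω → ℝ}

theorem bestLinearPredictor_eq_of_fbmCov
    (hcov : ∀ t s, 0 ≤ t → 0 ≤ s → ∫ ω, B t ω * B s ω ∂μ = fbmCov H t s)
    (hH : 0 < H) {s τ : ℝ} (hs : 0 ≤ s) (hτ : 0 < τ) :
    bestLinearPredictor μ (B s) (B τ)
      = fun ω => B τ ω / (2 * τ ^ (2 * H)) * (s ^ (2 * H) + τ ^ (2 * H) - |s - τ| ^ (2 * H)) := by
  have : τ ^ (2 * H) ≠ 0 := (Real.rpow_pos_of_pos hτ _).ne'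
  funext ω
  rw [bestLinearPredictor, hcov s τ hs hτ.le, hcov τ τ hτ.le hτ.le, fbmCov_self hH, fbmCov]
  field_simp

theorem integral_sq_sub_bestLinearPredictor_of_fbmCov
    (hcov : ∀ t s, 0 ≤ t → 0 ≤ s → ∫ ω, B t ω * B s ω ∂μ = fbmCov H t s)
    (hint : ∀ t s, Integrable (fun ω => B t ω * B s ω) μ) (hH : 0 < H) {s τ : ℝ}
    (hs : 0 ≤ s) (hτ : 0 ≤ τ) :
    ∫ ω, (B s ω - bestLinearPredictor μ (B s) (B τ) ω) ^ 2 ∂μ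
      = s ^ (2 * H) - fbmCov H s τ ^ 2 / fbmCov H τ τ := by
  rw [integral_sq_sub_bestLinearPredictor (hint s s) (hint s τ) (hint τ τ), hcov s s hs hs,
    hcov s τ hs hτ, hcov τ τ hτ hτ, fbmCov_self hH]

end FractionalBrownianMotion

theorem setIntegral_Ioc_indicator_Ici {a b c : ℝ} (hac : a < c) (hcb : c ≤ b) (f : ℝ → ℝ) :
    ∫ s in Ioc a b, (Ici c).indicator f s = ∫ s in c..b, f s := by
  have hset : Ici c ∩ Ioc a b = Icc c b := by
    ext x
    simp only [mem_inter_iff, mem_Ici, mem_Ioc, mem_Icc]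
    exact ⟨fun ⟨h1, _, h3⟩ => ⟨h1, h3⟩, fun ⟨h1, h2⟩ => ⟨h1, hac.trans_le h1, h2⟩⟩
  rw [integral_indicator measurableSet_Ici, Measure.restrict_restrict measurableSet_Ici, hset,
    integral_Icc_eq_integral_Ioc, intervalIntegral.integral_of_le hcb]

theorem fbm_one_sample_distortion {Ω : Type*} [MeasurableSpace Ω] (μ : Measure Ω)
    [IsProbabilityMeasure μ]
    (H τ1 T : ℝ) (hH : H ∈ Set.Ioo (0:ℝ) 1) (hτ1 : 0 < τ1) (hτ1T : τ1 < T)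
    (B : ℝ → Ω → ℝ)
    (hcov : ∀ t s : ℝ, 0 ≤ t → 0 ≤ s →
      ∫ ω, B t ω * B s ω ∂μ = (1/2) * (t ^ (2*H) + s ^ (2*H) - |t - s| ^ (2*H)))
    (hint : ∀ t s : ℝ, Integrable (fun ω => B t ω * B s ω) μ)
    (Bhat : ℝ → Ω → ℝ)
    (hBhat_lt : ∀ s : ℝ, s < τ1 → Bhat s = fun _ => 0)
    (hBhat_ge : ∀ s : ℝ, τ1 ≤ s → Bhat s = fun ω =>
      B τ1 ω / (2 * τ1 ^ (2*H)) * (s ^ (2*H) + τ1 ^ (2*H) - |s - τ1| ^ (2*H)))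
    (hFub : Integrable (Function.uncurry fun s ω => (B s ω - Bhat s ω) ^ 2)
      ((volume.restrict (Set.Ioc 0 T)).prod μ)) :
    ∫ ω, (∫ s in (0:ℝ)..T, (B s ω - Bhat s ω) ^ 2) ∂μ
      = T ^ (2*H+1) / (2*H+1)
        - (1 / (4 * τ1 ^ (2*H)))
          * ∫ s in τ1..T, (s ^ (2*H) + τ1 ^ (2*H) - |s - τ1| ^ (2*H)) ^ 2 := by
  obtain ⟨hH, -⟩ := hH
  have hcov' : ∀ t s, 0 ≤ t → 0 ≤ s → ∫ ω, B t ω * B s ω ∂μ = fbmCov H t s := hcov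
  set g := fun s => fbmCov H s τ1 ^ 2 / fbmCov H τ1 τ1
  have hmse : ∀ s ∈ Ioc 0 T,
      ∫ ω, (B s ω - Bhat s ω) ^ 2 ∂μ = s ^ (2 * H) - (Ici τ1).indicator g s := by
    rintro s ⟨hs, -⟩
    rcases lt_or_ge s τ1 with hsτ | hτs
    · rw [hBhat_lt s hsτ, indicator_of_notMem (notMem_Ici.mpr hsτ), ← fbmCov_self hH,
        ← hcov' s s hs.le hs.le]
      simp only [sub_zero, sq]
    · rw [hBhat_ge s hτs, ← bestLinearPredictor_eq_of_fbmCov hcov' hH hs.le hτ1,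
        integral_sq_sub_bestLinearPredictor_of_fbmCov hcov' hint hH hs.le hτ1.le,
        indicator_of_mem (mem_Ici.mpr hτs)]
  have hg : IntegrableOn ((Ici τ1).indicator g) (Ioc 0 T) :=
    ((((continuous_fbmCov_left hH τ1).pow 2).div_const _).integrableOn_Ioc).indicator
      measurableSet_Ici
  calc ∫ ω, (∫ s in (0:ℝ)..T, (B s ω - Bhat s ω) ^ 2) ∂μ
      = ∫ s in Ioc 0 T, ∫ ω, (B s ω - Bhat s ω) ^ 2 ∂μ := by
        simp_rw [intervalIntegral.integral_of_le (hτ1.trans hτ1T).le]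
        exact (integral_integral_swap hFub).symm
    _ = ∫ s in Ioc 0 T, (s ^ (2 * H) - (Ici τ1).indicator g s) :=
        setIntegral_congr_fun measurableSet_Ioc hmse
    _ = (∫ s in (0:ℝ)..T, s ^ (2 * H)) - ∫ s in τ1..T, g s := by
        rw [integral_sub (Real.continuous_rpow_const (by positivity)).integrableOn_Ioc hg,
          setIntegral_Ioc_indicator_Ici hτ1 hτ1T.le,
          intervalIntegral.integral_of_le (hτ1.trans hτ1T).le]
    _ = _ := by
        simp only [g, fbmCov_sq_div hH hτ1, intervalIntegral.integral_const_mul]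
        rw [integral_rpow (Or.inl (by linarith)), Real.zero_rpow (by positivity), sub_zero]
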